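/- Let states z_t ∈ ℝ^d evolve under z_{t+1} = A z_t + B a_t with A ∈ ℝ^{d×d}, B ∈ ℝ^{d×d_a}. Let v_t := z_{t+1} − z_t and suppose ‖v_t‖₂ = ‖v_{t+1}‖₂ = c > 0. Let C_t := ⟨v_t, v_{t+1}⟩/(‖v_t‖₂‖v_{t+1}‖₂) and suppose ‖a_{t+1} − a_t‖₂ ≤ Δ. Then, writing v̂_t := v_t/‖v_t‖₂, the deviation from straightness along the visited direction is bounded as ‖(A − I) v̂_t‖₂ ≤ √(2(1 − C_t)) + ‖B‖₂ Δ / c. -/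

import Mathlib

open scoped InnerProductSpace

/-- Apply a real matrix to a Euclidean vector. -/
noncomputable def mulVecE {m n : ℕ} (A : Matrix (Fin m) (Fin n) ℝ)
    (x : EuclideanSpace ℝ (Fin n)) : EuclideanSpace ℝ (Fin m) :=
  Matrix.toEuclideanLin A x

/-- The ℓ²-operator norm (largest singular value) of a real matrix. -/
noncomputable def l2OpNorm {m n : ℕ} (A : Matrix (Fin m) (Fin n) ℝ) : ℝ :=
  ‖LinearMap.toContinuousLinearMap (Matrix.toEuclideanLin A)‖

/-!
Subtracting the dynamics at times `t` and `t + 1` gives `v_{t+1} = A v_t + B (a_{t+1} − a_t)`,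
so `(A − I) v_t = (v_{t+1} − v_t) − B (a_{t+1} − a_t)`. The first term has norm
`c √(2(1 − C_t))` by the law of cosines, the second at most `‖B‖₂ Δ`; dividing by `c`
gives the bound.
-/

section mulVecE

variable {m n : ℕ}

lemma mulVecE_sub (A : Matrix (Fin m) (Fin n) ℝ) (x y : EuclideanSpace ℝ (Fin n)) :
    mulVecE A (x - y) = mulVecE A x - mulVecE A y :=
  map_sub _ x y

lemma mulVecE_smul (A : Matrix (Fin m) (Fin n) ℝ) (r : ℝ) (x : EuclideanSpace ℝ (Fin n)) :
    mulVecE A (r • x) = r • mulVecE A x :=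
  map_smul _ r x

lemma mulVecE_sub_one (A : Matrix (Fin n) (Fin n) ℝ) (x : EuclideanSpace ℝ (Fin n)) :
    mulVecE (A - 1) x = mulVecE A x - x := by
  simp [mulVecE, Matrix.toEuclideanLin]

lemma norm_mulVecE_le (A : Matrix (Fin m) (Fin n) ℝ) (x : EuclideanSpace ℝ (Fin n)) :
    ‖mulVecE A x‖ ≤ l2OpNorm A * ‖x‖ :=
  (LinearMap.toContinuousLinearMap (Matrix.toEuclideanLin A)).le_opNorm x

end mulVecE

lemma norm_sub_div_eq_sqrt_two_mul_one_sub_cos {E : Type*} [NormedAddCommGroup E]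
    [InnerProductSpace ℝ E] {x y : E} (hx : x ≠ 0) (hxy : ‖x‖ = ‖y‖) :
    ‖y - x‖ / ‖x‖ = Real.sqrt (2 * (1 - ⟪x, y⟫_ℝ / (‖x‖ * ‖y‖))) := by
  have hx' : ‖x‖ ≠ 0 := norm_ne_zero_iff.mpr hx
  have hsq : 2 * (1 - ⟪x, y⟫_ℝ / (‖x‖ * ‖y‖)) = (‖y - x‖ / ‖x‖) ^ 2 := by
    rw [div_pow, norm_sub_sq_real, real_inner_comm, ← hxy]
    field_simp
    ring
  rw [hsq, Real.sqrt_sq (by positivity)]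

lemma mulVecE_sub_one_velocity {d da : ℕ} {A : Matrix (Fin d) (Fin d) ℝ}
    {B : Matrix (Fin d) (Fin da) ℝ} {z : ℕ → EuclideanSpace ℝ (Fin d)}
    {a : ℕ → EuclideanSpace ℝ (Fin da)}
    (hdyn : ∀ s, z (s + 1) = mulVecE A (z s) + mulVecE B (a s)) (t : ℕ) :
    mulVecE (A - 1) (z (t + 1) - z t) =
      (z (t + 2) - z (t + 1)) - (z (t + 1) - z t) - mulVecE B (a (t + 1) - a t) := by
  rw [mulVecE_sub_one, mulVecE_sub, mulVecE_sub, hdyn (t + 1), hdyn t]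
  abel

/-- Under linear latent dynamics `z_{t+1} = A z_t + B a_t` with consecutive latent
velocities `v_t, v_{t+1}` of common norm `c > 0`, cosine similarity `C_t`, and action
increment bounded by `Δ`, the deviation from straightness along the visited unit
direction `v̂_t = v_t/‖v_t‖` satisfies
`‖(A − I) v̂_t‖ ≤ √(2(1 − C_t)) + ‖B‖₂ Δ / c`. -/
theorem cosine_similarity_controls_straightness {d da : ℕ}
    (A : Matrix (Fin d) (Fin d) ℝ) (B : Matrix (Fin d) (Fin da) ℝ)
    (z : ℕ → EuclideanSpace ℝ (Fin d)) (a : ℕ → EuclideanSpace ℝ (Fin da))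
    (hdyn : ∀ s, z (s + 1) = mulVecE A (z s) + mulVecE B (a s))
    (v : ℕ → EuclideanSpace ℝ (Fin d)) (hv : ∀ s, v s = z (s + 1) - z s)
    (t : ℕ) (c : ℝ) (hc : 0 < c) (hvt : ‖v t‖ = c) (hvt1 : ‖v (t + 1)‖ = c)
    (Ct : ℝ) (hCt : Ct = ⟪v t, v (t + 1)⟫_ℝ / (‖v t‖ * ‖v (t + 1)‖))
    (Δ : ℝ) (hΔ : ‖a (t + 1) - a t‖ ≤ Δ) :
    ‖mulVecE (A - 1) ((‖v t‖)⁻¹ • v t)‖ ≤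
      Real.sqrt (2 * (1 - Ct)) + l2OpNorm B * Δ / c := by
  have hdecomp : mulVecE (A - 1) (v t) = (v (t + 1) - v t) - mulVecE B (a (t + 1) - a t) := by
    rw [hv, hv, mulVecE_sub_one_velocity hdyn]
  have hB : ‖mulVecE B (a (t + 1) - a t)‖ ≤ l2OpNorm B * Δ :=
    (norm_mulVecE_le B _).trans (mul_le_mul_of_nonneg_left hΔ (norm_nonneg _))
  have hcos : Real.sqrt (2 * (1 - Ct)) = ‖v (t + 1) - v t‖ / c := by
    rw [hCt, ← hvt, norm_sub_div_eq_sqrt_two_mul_one_sub_cos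
      (norm_pos_iff.mp (hvt ▸ hc)) (hvt.trans hvt1.symm)]
  calc ‖mulVecE (A - 1) ((‖v t‖)⁻¹ • v t)‖
      = ‖mulVecE (A - 1) (v t)‖ / c := by
        rw [mulVecE_smul, norm_smul, norm_inv, norm_norm, hvt, inv_mul_eq_div]
    _ ≤ (‖v (t + 1) - v t‖ + l2OpNorm B * Δ) / c := by
        gcongr
        rw [hdecomp]
        exact (norm_sub_le _ _).trans (add_le_add_right hB _)
    _ = Real.sqrt (2 * (1 - Ct)) + l2OpNorm B * Δ / c := by rw [hcos, add_div]
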